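/- Under the setup of Theorem 1 (two Kalman filters with gains $K_t$ and $\tilde{K}_t$ receiving measurements $z_t$ and $z_t + \epsilon_t$ respectively), if $m_0 = \tilde{m}_0$ and $K_t = \tilde{K}_t$ for all $t \ge 1$, then the separation satisfies $m_t - \tilde{m}_t = -\tilde{K}_t \epsilon_t + \sum_{i=0}^{t-2} \Big(\prod_{j=0}^{i} (F - \tilde{K}_{t-j} H F)\Big) (-\tilde{K}_{t-1-i} \epsilon_{t-1-i})$; in particular $m_t - \tilde{m}_t$ does not depend on the measurements $z_1, \ldots, z_t$ or on the control inputs $u_0, \ldots, u_{t-1}$. -/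

import Mathlib

/-!
The filter update is affine in the previous estimate, with the same linear part
`(1 - K H) F = F - K H F` for both filters when the gains agree. Subtracting the two updates
cancels the measurements and the control inputs, so the separation `dₜ = mₜ - m̃ₜ` obeys the
homogeneous-plus-forcing recursion `dₜ = Aₜ dₜ₋₁ - K̃ₜ εₜ` with `d₀ = 0`, and
variation of constants unrolls it into the stated sum.
-/

open Finset Matrix

section

variable {n R : Type*} [Fintype n] [DecidableEq n] [Ring R]

def transitionProd (A : ℕ → Matrix n n R) (t k : ℕ) : Matrix n n R :=
  ((List.range k).map fun j => A (t - j)).prod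

@[simp]
theorem transitionProd_zero (A : ℕ → Matrix n n R) (t : ℕ) : transitionProd A t 0 = 1 := rfl

theorem transitionProd_succ_succ (A : ℕ → Matrix n n R) (t k : ℕ) :
    transitionProd A (t + 1) (k + 1) = A (t + 1) * transitionProd A t k := by
  simp only [transitionProd, List.range_succ_eq_map, List.map_cons, List.map_map,
    List.prod_cons, Nat.sub_zero]
  congr 3
  funext j
  simp

theorem eq_sum_transitionProd_mulVec_of_recurrence (A : ℕ → Matrix n n R)
    (w d : ℕ → n → R) (h0 : d 0 = 0) (hd : ∀ t, d (t + 1) = A (t + 1) *ᵥ d t + w (t + 1)) :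
    ∀ t, d t = ∑ i ∈ range t, transitionProd A t i *ᵥ w (t - i) := by
  intro t
  induction t with
  | zero => simp [h0]
  | succ t ih =>
    rw [hd, ih, sum_range_succ', mulVec_sum]
    simp [transitionProd_succ_succ, mulVec_mulVec]

theorem kalman_update_sub (F B H K : Matrix n n R) (x y v z e : n → R) :
    ((1 - K * H) *ᵥ (F *ᵥ x + B *ᵥ v) + K *ᵥ z)
        - ((1 - K * H) *ᵥ (F *ᵥ y + B *ᵥ v) + K *ᵥ (z + e))
      = (F - K * H * F) *ᵥ (x - y) + -(K *ᵥ e) := by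
  rw [show F - K * H * F = (1 - K * H) * F by rw [sub_mul, one_mul], ← mulVec_mulVec]
  simp only [mulVec_add, mulVec_sub]
  abel

end

theorem stmt_3
    (F B H : Matrix (Fin 2) (Fin 2) ℝ)
    (K Kt : ℕ → Matrix (Fin 2) (Fin 2) ℝ)
    (m mt : ℕ → Fin 2 → ℝ)
    (z ε u : ℕ → Fin 2 → ℝ)
    (hm : ∀ t : ℕ, 1 ≤ t →
      m t = (1 - K t * H).mulVec (F.mulVec (m (t - 1)) + B.mulVec (u (t - 1)))
              + (K t).mulVec (z t))
    (hmt : ∀ t : ℕ, 1 ≤ t →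
      mt t = (1 - Kt t * H).mulVec (F.mulVec (mt (t - 1)) + B.mulVec (u (t - 1)))
              + (Kt t).mulVec (z t + ε t))
    (h0 : m 0 = mt 0)
    (hKeq : ∀ t : ℕ, 1 ≤ t → K t = Kt t) :
    ∀ t : ℕ, 1 ≤ t →
      m t - mt t =
        -((Kt t).mulVec (ε t))
          + ∑ i ∈ Finset.range (t - 1),
              ((((List.range (i + 1)).map (fun j => F - Kt (t - j) * H * F)).prod).mulVec
                (-((Kt (t - 1 - i)).mulVec (ε (t - 1 - i))))) := by
  have hstep : ∀ t, m (t + 1) - mt (t + 1)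
      = (F - Kt (t + 1) * H * F) *ᵥ (m t - mt t) + -(Kt (t + 1) *ᵥ ε (t + 1)) := fun t => by
    rw [hm _ t.succ_pos, hmt _ t.succ_pos, hKeq _ t.succ_pos]
    exact kalman_update_sub ..
  have hsep := eq_sum_transitionProd_mulVec_of_recurrence (fun s => F - Kt s * H * F)
    (fun s => -(Kt s *ᵥ ε s)) (fun s => m s - mt s) (sub_eq_zero.2 h0) hstep
  rintro (_ | s) hs
  · omega
  rw [hsep, sum_range_succ', add_comm]
  simp [transitionProd]
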